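/- For every integer e ≥ 2, setting d = 4e + 3, there exist a nonzero ternary form T ∈ S^d ℂ³ and finite sets A, B ⊆ ℙ²(ℂ) such that A is a non-redundant set computing T with ℓ(A) = binom(2e+3,2) + e + 2 and B is a non-redundant set computing T with ℓ(B) = binom(2e+3,2) + e. (In particular the bound r ≤ binom(m+2,2) + ⌈m/2⌉ in the rank criterion for odd-degree ternary forms is sharp when d ≡ 3 mod 4.) -/

import Mathlib

open MvPolynomial

noncomputable section

/-- Projective n-space over ℂ, viewed as classes of linear forms (vectors in ℂ^{n+1}). -/
abbrev Proj (n : ℕ) := Projectivization ℂ (Fin (n + 1) → ℂ)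

instance (n : ℕ) : DecidableEq (Proj n) := Classical.decEq _

/-- The linear form with coefficient vector `v`. -/
def linForm (n : ℕ) (v : Fin (n + 1) → ℂ) : MvPolynomial (Fin (n + 1)) ℂ :=
  ∑ i, MvPolynomial.C (v i) * MvPolynomial.X i

/-- The `d`-th Veronese image of a projective point: the `d`-th power of (a representative of)
the corresponding linear form. -/
def vero (n d : ℕ) (P : Proj n) : MvPolynomial (Fin (n + 1)) ℂ :=
  linForm n P.rep ^ d

/-- `A` computes `T` : the class of `T` lies in the projective linear span of `v_d(A)`,
equivalently `T` lies in the linear span of the `d`-th powers of the points of `A`. -/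
def Computes (n d : ℕ) (A : Finset (Proj n)) (T : MvPolynomial (Fin (n + 1)) ℂ) : Prop :=
  T ∈ Submodule.span ℂ (vero n d '' (A : Set (Proj n)))

/-- `A` is a non-redundant set computing `T`. -/
def NRComputes (n d : ℕ) (A : Finset (Proj n)) (T : MvPolynomial (Fin (n + 1)) ℂ) : Prop :=
  Computes n d A T ∧ ∀ A' ⊂ A, ¬ Computes n d A' T

/-- The (Waring) rank of `T` : minimal cardinality of a finite set computing `T`. -/
def waringRank (n d : ℕ) (T : MvPolynomial (Fin (n + 1)) ℂ) : ℕ :=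
  sInf {r | ∃ A : Finset (Proj n), A.card = r ∧ Computes n d A T}

/-- `T` is identifiable: there is exactly one finite set computing `T` whose
cardinality equals the rank of `T`. -/
def Identifiable (n d : ℕ) (T : MvPolynomial (Fin (n + 1)) ℂ) : Prop :=
  ∃! A : Finset (Proj n), A.card = waringRank n d T ∧ Computes n d A T

/-- The evaluation map of degree `j` on the chosen homogeneous coordinates of `Z`. -/
def evalMap (n j : ℕ) (Z : Finset (Proj n)) :
    MvPolynomial.homogeneousSubmodule (Fin (n + 1)) ℂ j →ₗ[ℂ] (Z → ℂ) where
  toFun F := fun P => MvPolynomial.eval (P.1).rep F.1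
  map_add' F G := by funext P; simp
  map_smul' c F := by funext P; simp

/-- The Hilbert function of the finite set `Z` (at a natural number `j`). -/
def hilbN (n : ℕ) (Z : Finset (Proj n)) (j : ℕ) : ℕ :=
  Module.finrank ℂ (LinearMap.range (evalMap n j Z))

/-- The Hilbert function of the finite set `Z` (zero in negative degrees). -/
def hilb (n : ℕ) (Z : Finset (Proj n)) (j : ℤ) : ℕ :=
  if j < 0 then 0 else hilbN n Z j.toNat

/-- The first difference of the Hilbert function. -/
def Dhilb (n : ℕ) (Z : Finset (Proj n)) (j : ℤ) : ℤ :=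
  (hilb n Z j : ℤ) - (hilb n Z (j - 1) : ℤ)

/-- The `d`-th Kruskal rank of `A` : the largest `k` such that every subset of `A`
with at most `k` elements has linearly independent image under `v_d`. -/
def kruskalRank (n d : ℕ) (A : Finset (Proj n)) : ℕ :=
  sSup {k | k ≤ A.card ∧
    ∀ A' ⊆ A, A'.card ≤ k → LinearIndependent ℂ (fun P : A' => vero n d P.1)}

/-- The Cayley–Bacharach property in degree `d` for the finite set `Z`. -/
def CB (n d : ℕ) (Z : Finset (Proj n)) : Prop :=
  ∀ P ∈ Z, ∀ F : MvPolynomial (Fin (n + 1)) ℂ, F.IsHomogeneous d →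
    (∀ Q ∈ Z, Q ≠ P → MvPolynomial.eval Q.rep F = 0) → MvPolynomial.eval P.rep F = 0

end

/-!
The form is a sum of `d`-th powers, `d = 4e + 3`, of the linear forms of a grid of
`2e(e + 1) - 1` points and of points on the two coordinate lines `x₂ = 0` and `x₁ = 0`.
On each of these lines the `d`-th powers of `4e + 5 ≥ d + 2` points satisfy a linear relation
with the Lagrange nodal weights as coefficients, so `2e + 2` points of each line can be traded
for the other `2e + 3`: this gives two decompositions whose lengths differ by `2`.
Both are non-redundant because each of their points is cut out of the others by at most `d`
lines missing it; by apolarity, the product of these lines, read as a differential operator,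
is a functional killing the `d`-th powers of all the other points but not its own.
-/

open Finset

namespace Lagrange

variable {F : Type*} [Field F] {ι : Type*} [DecidableEq ι] {s : Finset ι} {v : ι → F}

theorem sum_nodalWeight_mul_pow_eq_zero (hvs : Set.InjOn v s) {m : ℕ} (hm : m + 2 ≤ #s) :
    ∑ i ∈ s, nodalWeight s v i * v i ^ m = 0 := by
  have h := coeff_eq_sum hvs (P := Polynomial.X ^ m)
    (by rw [Polynomial.degree_X_pow]; exact_mod_cast (by omega))
  rw [Polynomial.coeff_X_pow, if_neg (by omega)] at h
  simp only [Polynomial.eval_pow, Polynomial.eval_X, div_eq_mul_inv, ← prod_inv_distrib] at h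
  simp only [nodalWeight, mul_comm _ (v _ ^ m), h]

theorem sum_nodalWeight_smul_add_smul_pow_eq_zero {R : Type*} [CommRing R] [Algebra F R]
    (hvs : Set.InjOn v s) (P Q : R) {D : ℕ} (hD : D + 2 ≤ #s) :
    ∑ i ∈ s, nodalWeight s v i • (P + v i • Q) ^ D = 0 := by
  have expand : ∀ i, (P + v i • Q) ^ D =
      ∑ k ∈ range (D + 1), v i ^ (D - k) • (P ^ k * Q ^ (D - k) * (D.choose k : R)) := by
    intro i
    rw [add_pow]
    refine sum_congr rfl fun k _ => ?_
    rw [smul_pow, mul_smul_comm, smul_mul_assoc]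
  simp_rw [expand, smul_sum, smul_smul]
  rw [sum_comm]
  refine sum_eq_zero fun k hk => ?_
  rw [← sum_smul, sum_nodalWeight_mul_pow_eq_zero hvs (by omega), zero_smul]

end Lagrange

noncomputable section Apolarity

variable {n : ℕ}

def dirDeriv (w : Fin (n + 1) → ℂ) :
    Derivation ℂ (MvPolynomial (Fin (n + 1)) ℂ) (MvPolynomial (Fin (n + 1)) ℂ) :=
  ∑ i, w i • pderiv i

theorem dirDeriv_apply (w : Fin (n + 1) → ℂ) (f : MvPolynomial (Fin (n + 1)) ℂ) :
    dirDeriv w f = ∑ i, w i • pderiv i f := by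
  rw [← Derivation.coeFnAddMonoidHom_apply, dirDeriv, map_sum, Finset.sum_apply]
  rfl

theorem dirDeriv_linForm (w v : Fin (n + 1) → ℂ) : dirDeriv w (linForm n v) = C (w ⬝ᵥ v) := by
  simp [dirDeriv_apply, linForm, dotProduct, pderiv_X, Pi.single_apply, smul_eq_C_mul, mul_comm]

theorem dirDeriv_linForm_pow (w v : Fin (n + 1) → ℂ) (k : ℕ) :
    dirDeriv w (linForm n v ^ (k + 1)) = ((k + 1 : ℂ) * (w ⬝ᵥ v)) • linForm n v ^ k := by
  rw [Derivation.leibniz_pow, dirDeriv_linForm, add_tsub_cancel_right, smul_eq_mul, nsmul_eq_mul,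
    smul_eq_C_mul]
  simp only [map_mul, map_add, map_natCast, map_one]
  push_cast
  ring

def apolarFunctional : List (Fin (n + 1) → ℂ) → MvPolynomial (Fin (n + 1)) ℂ →ₗ[ℂ] ℂ
  | [] => lcoeff ℂ 0
  | w :: L => apolarFunctional L ∘ₗ (dirDeriv w).toLinearMap

theorem apolarFunctional_linForm_pow (L : List (Fin (n + 1) → ℂ)) (v : Fin (n + 1) → ℂ) :
    apolarFunctional L (linForm n v ^ L.length) =
      L.length.factorial * (L.map (· ⬝ᵥ v)).prod := by
  induction L with
  | nil => simp [apolarFunctional]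
  | cons w L ih =>
    simp only [apolarFunctional, LinearMap.comp_apply, Derivation.coeFn_coe,
      List.length_cons, dirDeriv_linForm_pow, map_smul, ih, smul_eq_mul, List.map_cons,
      List.prod_cons, Nat.factorial_succ]
    push_cast
    ring

theorem exists_functional_of_hyperplanes {d : ℕ} {L : List (Fin (n + 1) → ℂ)} (hL : L.length ≤ d)
    {p : Fin (n + 1) → ℂ} (hp : p ≠ 0) (hLp : ∀ w ∈ L, w ⬝ᵥ p ≠ 0) :
    ∃ φ : MvPolynomial (Fin (n + 1)) ℂ →ₗ[ℂ] ℂ, φ (linForm n p ^ d) ≠ 0 ∧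
      ∀ q, (∃ w ∈ L, w ⬝ᵥ q = 0) → φ (linForm n q ^ d) = 0 := by
  obtain ⟨k, hk⟩ := Function.ne_iff.mp hp
  set L' := L ++ List.replicate (d - L.length) (Pi.single k 1) with hL'
  have hlen : L'.length = d := by simp [hL']; omega
  refine ⟨apolarFunctional L', ?_, ?_⟩
  · rw [← hlen, apolarFunctional_linForm_pow]
    refine mul_ne_zero (by exact_mod_cast L'.length.factorial_ne_zero) (List.prod_ne_zero ?_)
    simp only [hL', List.map_append, List.mem_append, List.mem_map, List.mem_replicate]
    rintro (⟨w, hw, h⟩ | ⟨w, ⟨-, rfl⟩, h⟩)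
    · exact hLp w hw h
    · simp_all [single_dotProduct]
  · rintro q ⟨w, hw, hwq⟩
    rw [← hlen, apolarFunctional_linForm_pow, List.prod_eq_zero, mul_zero]
    exact List.mem_map.mpr ⟨w, List.mem_append_left _ hw, hwq⟩

end Apolarity

section NonRedundant

variable {n d : ℕ}

theorem nrComputes_of_separating {A : Finset (Proj n)} {T : MvPolynomial (Fin (n + 1)) ℂ}
    (hT : Computes n d A T)
    (hsep : ∀ P ∈ A, ∃ φ : MvPolynomial (Fin (n + 1)) ℂ →ₗ[ℂ] ℂ, φ T ≠ 0 ∧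
      ∀ Q ∈ A, Q ≠ P → φ (vero n d Q) = 0) :
    NRComputes n d A T := by
  refine ⟨hT, fun A' hA' hA'T => ?_⟩
  obtain ⟨P, hPA, hPA'⟩ := exists_of_ssubset hA'
  obtain ⟨φ, hφT, hφ⟩ := hsep P hPA
  have hspan : Submodule.span ℂ (vero n d '' A') ≤ LinearMap.ker φ := by
    rw [Submodule.span_le]
    rintro _ ⟨Q, hQ, rfl⟩
    exact hφ Q (hA'.subset hQ) (ne_of_mem_of_not_mem hQ hPA')
  exact hφT (hspan hA'T)

theorem NRComputes.ne_zero {A : Finset (Proj n)} {T : MvPolynomial (Fin (n + 1)) ℂ}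
    (h : NRComputes n d A T) (hA : A.Nonempty) : T ≠ 0 := by
  rintro rfl
  exact h.2 ∅ hA.empty_ssubset (Submodule.zero_mem _)

theorem linForm_smul (c : ℂ) (v : Fin (n + 1) → ℂ) : linForm n (c • v) = c • linForm n v := by
  simp [linForm, smul_sum, smul_eq_C_mul, mul_assoc]

theorem vero_mk (v : Fin (n + 1) → ℂ) (hv : v ≠ 0) :
    ∃ c : ℂ, c ≠ 0 ∧ vero n d (Projectivization.mk ℂ v hv) = c • linForm n v ^ d := by
  obtain ⟨a, ha⟩ := (Projectivization.mk_eq_mk_iff ℂ _ _ (Projectivization.rep_nonzero _) hv).mp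
    (Projectivization.mk_rep _)
  refine ⟨(a : ℂ) ^ d, pow_ne_zero _ a.ne_zero, ?_⟩
  rw [vero, ← ha, Units.smul_def, linForm_smul, smul_pow]

theorem nrComputes_sum_smul_pow {ι : Type*} {S : Finset ι} {v : ι → Fin (n + 1) → ℂ}
    (hv : ∀ i, v i ≠ 0) {a : ι → ℂ} (ha : ∀ i ∈ S, a i ≠ 0)
    (hsep : ∀ i ∈ S, ∃ φ : MvPolynomial (Fin (n + 1)) ℂ →ₗ[ℂ] ℂ, φ (linForm n (v i) ^ d) ≠ 0 ∧
      ∀ j ∈ S, j ≠ i → φ (linForm n (v j) ^ d) = 0) :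
    NRComputes n d (S.image fun i => Projectivization.mk ℂ (v i) (hv i))
        (∑ i ∈ S, a i • linForm n (v i) ^ d) ∧
      (S.image fun i => Projectivization.mk ℂ (v i) (hv i)).card = S.card := by
  choose! φ hφi hφj using hsep
  choose c hc0 hc using fun i => vero_mk (d := d) (v i) (hv i)
  have hinj : Set.InjOn (fun i => Projectivization.mk ℂ (v i) (hv i)) S := by
    intro i hi j hj hij
    by_contra hne
    have h := congrArg (φ i ∘ vero n d) hij
    simp only [Function.comp_apply, hc, map_smul, hφj i hi j hj (Ne.symm hne), mul_zero,
      smul_eq_mul] at h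
    exact mul_ne_zero (hc0 i) (hφi i hi) h
  refine ⟨nrComputes_of_separating ?_ ?_, card_image_of_injOn hinj⟩
  · refine Submodule.sum_mem _ fun i hi => Submodule.smul_mem _ _ ?_
    have hpow : linForm n (v i) ^ d = (c i)⁻¹ • vero n d (Projectivization.mk ℂ (v i) (hv i)) := by
      rw [hc, inv_smul_smul₀ (hc0 i)]
    rw [hpow]
    exact Submodule.smul_mem _ _
      (Submodule.subset_span ⟨_, mem_coe.mpr (mem_image_of_mem _ hi), rfl⟩)
  · simp only [mem_image]
    rintro _ ⟨i, hi, rfl⟩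
    refine ⟨φ i, ?_, ?_⟩
    · rw [map_sum, sum_eq_single_of_mem i hi fun j hj hji => by
        rw [map_smul, hφj i hi j hj hji, smul_zero], map_smul, smul_eq_mul]
      exact mul_ne_zero (ha i hi) (hφi i hi)
    · rintro _ ⟨j, hj, rfl⟩ hji
      rw [hc, map_smul, hφj i hi j hj (fun h => hji (h ▸ rfl)), smul_zero]

theorem isHomogeneous_sum_smul_linForm_pow {ι : Type*} (S : Finset ι) (a : ι → ℂ)
    (v : ι → Fin (n + 1) → ℂ) : (∑ i ∈ S, a i • linForm n (v i) ^ d).IsHomogeneous d := by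
  refine IsHomogeneous.sum _ _ _ fun i _ => ?_
  simpa [smul_eq_C_mul, linForm] using (((IsHomogeneous.sum _ _ _ fun j _ =>
    isHomogeneous_C_mul_X (v i j) j).pow d).C_mul (a i))

/-- A vector `w` stands for the hyperplane `w ⬝ᵥ x = 0`. -/
def SeparatedByHyperplanes (d : ℕ) {ι : Type*} (S : Finset ι) (v : ι → Fin (n + 1) → ℂ) : Prop :=
  ∀ i ∈ S, ∃ L : List (Fin (n + 1) → ℂ), L.length ≤ d ∧ (∀ w ∈ L, w ⬝ᵥ v i ≠ 0) ∧
    ∀ j ∈ S, j ≠ i → ∃ w ∈ L, w ⬝ᵥ v j = 0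

theorem SeparatedByHyperplanes.exists_functional {ι : Type*} {S : Finset ι}
    {v : ι → Fin (n + 1) → ℂ} (hS : SeparatedByHyperplanes d S v) (hv : ∀ i, v i ≠ 0) :
    ∀ i ∈ S, ∃ φ : MvPolynomial (Fin (n + 1)) ℂ →ₗ[ℂ] ℂ, φ (linForm n (v i) ^ d) ≠ 0 ∧
      ∀ j ∈ S, j ≠ i → φ (linForm n (v j) ^ d) = 0 := by
  intro i hi
  obtain ⟨L, hL, hLi, hLj⟩ := hS i hi
  obtain ⟨φ, hφi, hφ⟩ := exists_functional_of_hyperplanes hL (hv i) hLi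
  exact ⟨φ, hφi, fun j hj hji => hφ _ (hLj j hj hji)⟩

end NonRedundant

noncomputable section Configuration

/-- Nonzero, so that no point lies on both axes and the rows `x₁ = node i • x₂` miss the axes. -/
def node (k : ℕ) : ℂ := k + 1

@[simp] theorem node_ne_zero (k : ℕ) : node k ≠ 0 := by
  unfold node; exact_mod_cast k.succ_ne_zero

theorem node_injective : Function.Injective node := fun k l h => by
  simpa [node] using h

@[simp] theorem node_inj {k l : ℕ} : node k = node l ↔ k = l := node_injective.eq_iff

def configPoint : (ℕ × ℕ) ⊕ (ℕ ⊕ ℕ) → Fin 3 → ℂ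
  | .inl (i, j) => ![node j, node i, 1]
  | .inr (.inl k) => ![1, node k, 0]
  | .inr (.inr k) => ![1, 0, node k]

theorem configPoint_ne_zero : ∀ x, configPoint x ≠ 0 := by
  rintro (_ | _ | _) h <;> simpa [configPoint] using congrFun h 0

variable {m r d : ℕ} {G : Finset (ℕ × ℕ)} {Q R : Finset ℕ}

theorem exists_hyperplanes_grid (hG : G ⊆ range m ×ˢ range r) (hd : m + r ≤ d) {i₀ j₀ : ℕ}
    (h₀ : (i₀, j₀) ∈ G) :
    ∃ L : List (Fin 3 → ℂ), L.length ≤ d ∧ (∀ w ∈ L, w ⬝ᵥ configPoint (.inl (i₀, j₀)) ≠ 0) ∧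
      ∀ y ∈ G.disjSum (Q.disjSum R), y ≠ .inl (i₀, j₀) → ∃ w ∈ L, w ⬝ᵥ configPoint y = 0 := by
  have hGr : ∀ {i j}, (i, j) ∈ G → i ∈ range m ∧ j ∈ range r := fun h => mem_product.mp (hG h)
  obtain ⟨hi₀, hj₀⟩ := hGr h₀
  refine ⟨![0, 0, 1] :: ![0, 1, 0] ::
    ((((range m).erase i₀).toList.map fun i => ![0, 1, -node i]) ++
      ((range r).erase j₀).toList.map fun j => ![1, 0, -node j]), ?_, ?_, ?_⟩
  · simp only [List.length_cons, List.length_append, List.length_map, length_toList,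
      card_erase_of_mem hi₀, card_erase_of_mem hj₀, card_range]
    have := mem_range.mp hi₀
    have := mem_range.mp hj₀
    omega
  · simp only [List.mem_cons, List.mem_append, List.mem_map, mem_toList, mem_erase]
    rintro w (rfl | rfl | ⟨i, ⟨hi, -⟩, rfl⟩ | ⟨j, ⟨hj, -⟩, rfl⟩)
    · simp [configPoint]
    · simp [configPoint]
    · simpa [configPoint, add_neg_eq_zero] using hi.symm
    · simpa [configPoint, add_neg_eq_zero] using hj.symm
  · simp only [List.mem_cons, List.mem_append, List.mem_map, mem_toList, mem_erase]
    rintro (⟨i, j⟩ | k | k) hy hne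
    · rw [inl_mem_disjSum] at hy
      obtain ⟨hi, hj⟩ := hGr hy
      by_cases hii : i = i₀
      · subst hii
        have hjj : j ≠ j₀ := fun h => hne (h ▸ rfl)
        exact ⟨_, Or.inr (Or.inr (Or.inr ⟨j, ⟨hjj, hj⟩, rfl⟩)), by simp [configPoint]⟩
      · exact ⟨_, Or.inr (Or.inr (Or.inl ⟨i, ⟨hii, hi⟩, rfl⟩)), by simp [configPoint]⟩
    · exact ⟨_, Or.inl rfl, by simp [configPoint]⟩
    · exact ⟨_, Or.inr (Or.inl rfl), by simp [configPoint]⟩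

theorem exists_hyperplanes_axis_inl (hG : G ⊆ range m ×ˢ range r) (hd : m + #Q ≤ d) {k₀ : ℕ}
    (h₀ : k₀ ∈ Q) :
    ∃ L : List (Fin 3 → ℂ), L.length ≤ d ∧ (∀ w ∈ L, w ⬝ᵥ configPoint (.inr (.inl k₀)) ≠ 0) ∧
      ∀ y ∈ G.disjSum (Q.disjSum R), y ≠ .inr (.inl k₀) → ∃ w ∈ L, w ⬝ᵥ configPoint y = 0 := by
  refine ⟨![0, 1, 0] :: (((range m).toList.map fun i => ![0, 1, -node i]) ++
    (Q.erase k₀).toList.map fun k => ![-node k, 1, 0]), ?_, ?_, ?_⟩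
  · simp only [List.length_cons, List.length_append, List.length_map, length_toList,
      card_erase_of_mem h₀, card_range]
    have := card_pos.mpr ⟨k₀, h₀⟩
    omega
  · simp only [List.mem_cons, List.mem_append, List.mem_map, mem_toList, mem_erase]
    rintro w (rfl | ⟨i, -, rfl⟩ | ⟨k, ⟨hk, -⟩, rfl⟩)
    · simp [configPoint]
    · simp [configPoint]
    · simpa [configPoint, neg_add_eq_zero] using hk
  · simp only [List.mem_cons, List.mem_append, List.mem_map, mem_toList, mem_erase]
    rintro (⟨i, j⟩ | k | k) hy hne
    · rw [inl_mem_disjSum] at hy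
      exact ⟨_, Or.inr (Or.inl ⟨i, (mem_product.mp (hG hy)).1, rfl⟩), by simp [configPoint]⟩
    · rw [inr_mem_disjSum, inl_mem_disjSum] at hy
      have hk : k ≠ k₀ := fun h => hne (h ▸ rfl)
      exact ⟨_, Or.inr (Or.inr ⟨k, ⟨hk, hy⟩, rfl⟩), by simp [configPoint]⟩
    · exact ⟨_, Or.inl rfl, by simp [configPoint]⟩

theorem exists_hyperplanes_axis_inr (hG : G ⊆ range m ×ˢ range r) (hd : m + #R ≤ d) {k₀ : ℕ}
    (h₀ : k₀ ∈ R) :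
    ∃ L : List (Fin 3 → ℂ), L.length ≤ d ∧ (∀ w ∈ L, w ⬝ᵥ configPoint (.inr (.inr k₀)) ≠ 0) ∧
      ∀ y ∈ G.disjSum (Q.disjSum R), y ≠ .inr (.inr k₀) → ∃ w ∈ L, w ⬝ᵥ configPoint y = 0 := by
  refine ⟨![0, 0, 1] :: (((range m).toList.map fun i => ![0, 1, -node i]) ++
    (R.erase k₀).toList.map fun k => ![-node k, 0, 1]), ?_, ?_, ?_⟩
  · simp only [List.length_cons, List.length_append, List.length_map, length_toList,
      card_erase_of_mem h₀, card_range]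
    have := card_pos.mpr ⟨k₀, h₀⟩
    omega
  · simp only [List.mem_cons, List.mem_append, List.mem_map, mem_toList, mem_erase]
    rintro w (rfl | ⟨i, -, rfl⟩ | ⟨k, ⟨hk, -⟩, rfl⟩)
    · simp [configPoint]
    · simp [configPoint]
    · simpa [configPoint, neg_add_eq_zero] using hk
  · simp only [List.mem_cons, List.mem_append, List.mem_map, mem_toList, mem_erase]
    rintro (⟨i, j⟩ | k | k) hy hne
    · rw [inl_mem_disjSum] at hy
      exact ⟨_, Or.inr (Or.inl ⟨i, (mem_product.mp (hG hy)).1, rfl⟩), by simp [configPoint]⟩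
    · exact ⟨_, Or.inl rfl, by simp [configPoint]⟩
    · rw [inr_mem_disjSum, inr_mem_disjSum] at hy
      have hk : k ≠ k₀ := fun h => hne (h ▸ rfl)
      exact ⟨_, Or.inr (Or.inr ⟨k, ⟨hk, hy⟩, rfl⟩), by simp [configPoint]⟩

theorem separatedByHyperplanes_configPoint (hG : G ⊆ range m ×ˢ range r) (hGd : m + r ≤ d)
    (hQd : m + #Q ≤ d) (hRd : m + #R ≤ d) :
    SeparatedByHyperplanes d (G.disjSum (Q.disjSum R)) configPoint := by
  rintro (⟨i, j⟩ | k | k) hx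
  · exact exists_hyperplanes_grid hG hGd (inl_mem_disjSum.mp hx)
  · exact exists_hyperplanes_axis_inl hG hQd (inl_mem_disjSum.mp (inr_mem_disjSum.mp hx))
  · exact exists_hyperplanes_axis_inr hG hRd (inr_mem_disjSum.mp (inr_mem_disjSum.mp hx))

theorem nrComputes_configPoint (hG : G ⊆ range m ×ˢ range r) (hGd : m + r ≤ d) {I : Finset ℕ}
    (hId : m + #I ≤ d) {c : ℕ → ℂ} (hc : ∀ k ∈ I, c k ≠ 0) :
    NRComputes 2 d ((G.disjSum (I.disjSum I)).image fun x =>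
        Projectivization.mk ℂ (configPoint x) (configPoint_ne_zero x))
      (∑ x ∈ G.disjSum (I.disjSum I),
        Sum.elim (fun _ => 1) (Sum.elim c c) x • linForm 2 (configPoint x) ^ d) ∧
    ((G.disjSum (I.disjSum I)).image fun x =>
        Projectivization.mk ℂ (configPoint x) (configPoint_ne_zero x)).card = #G + 2 * #I := by
  rw [two_mul, ← card_disjSum, ← card_disjSum]
  refine nrComputes_sum_smul_pow configPoint_ne_zero ?_
    ((separatedByHyperplanes_configPoint hG hGd hId hId).exists_functional configPoint_ne_zero)
  rintro (x | k | k) hx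
  · exact one_ne_zero
  · exact hc k (inl_mem_disjSum.mp (inr_mem_disjSum.mp hx))
  · exact hc k (inr_mem_disjSum.mp (inr_mem_disjSum.mp hx))

theorem linForm_configPoint_inr_inl (k : ℕ) :
    linForm 2 (configPoint (.inr (.inl k))) = X 0 + node k • X 1 := by
  simp [linForm, configPoint, Fin.sum_univ_three, smul_eq_C_mul]

theorem linForm_configPoint_inr_inr (k : ℕ) :
    linForm 2 (configPoint (.inr (.inr k))) = X 0 + node k • X 2 := by
  simp [linForm, configPoint, Fin.sum_univ_three, smul_eq_C_mul]

/-- On each axis, the `d`-th powers of the `N ≥ d + 2` collinear points satisfy the linear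
relation whose coefficients are the nodal weights. -/
theorem sum_configPoint_range_eq_sum_Ico {N M : ℕ} (hd : d + 2 ≤ N) (hM : M ≤ N)
    (G : Finset (ℕ × ℕ)) :
    ∑ x ∈ G.disjSum ((range M).disjSum (range M)),
        Sum.elim (fun _ => 1) (Sum.elim (Lagrange.nodalWeight (range N) node)
          (Lagrange.nodalWeight (range N) node)) x • linForm 2 (configPoint x) ^ d =
      ∑ x ∈ G.disjSum ((Ico M N).disjSum (Ico M N)),
        Sum.elim (fun _ => 1) (Sum.elim (-Lagrange.nodalWeight (range N) node)
          (-Lagrange.nodalWeight (range N) node)) x • linForm 2 (configPoint x) ^ d := by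
  have hN : d + 2 ≤ #(range N) := by rwa [card_range]
  have hQ := Lagrange.sum_nodalWeight_smul_add_smul_pow_eq_zero node_injective.injOn
    (X 0 : MvPolynomial (Fin 3) ℂ) (X 1) hN
  have hR := Lagrange.sum_nodalWeight_smul_add_smul_pow_eq_zero node_injective.injOn
    (X 0 : MvPolynomial (Fin 3) ℂ) (X 2) hN
  rw [← sum_range_add_sum_Ico _ hM] at hQ hR
  simp only [sum_disjSum, Sum.elim_inl, Sum.elim_inr, Pi.neg_apply, neg_smul, sum_neg_distrib,
    linForm_configPoint_inr_inl, linForm_configPoint_inr_inr]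
  linear_combination hQ + hR

end Configuration

/-- Sharpness of the rank criterion, `d ≡ 3 (mod 4)`: for `d = 4e+3`, `e ≥ 2`, there is
a nonzero form of degree `d` with a non-redundant decomposition of length
`binom(2e+3,2) + e + 2` and a non-redundant decomposition of length
`binom(2e+3,2) + e`. -/
theorem stmt17 (e : ℕ) (he : 2 ≤ e) :
    ∃ (T : MvPolynomial (Fin 3) ℂ) (A B : Finset (Proj 2)),
      T ≠ 0 ∧ T.IsHomogeneous (4 * e + 3) ∧
      A.card = Nat.choose (2 * e + 3) 2 + e + 2 ∧
      B.card = Nat.choose (2 * e + 3) 2 + e ∧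
      NRComputes 2 (4 * e + 3) A T ∧ NRComputes 2 (4 * e + 3) B T := by
  set γ := Lagrange.nodalWeight (range (4 * e + 5)) node
  set G := (range (2 * e) ×ˢ range (e + 1)).erase (0, 0)
  have hG : G ⊆ range (2 * e) ×ˢ range (e + 1) := erase_subset _ _
  have hγ : ∀ k < 4 * e + 5, γ k ≠ 0 := fun k hk =>
    Lagrange.nodalWeight_ne_zero node_injective.injOn (mem_range.mpr hk)
  obtain ⟨hA, hAcard⟩ := nrComputes_configPoint hG (d := 4 * e + 3) (by omega)
    (I := Ico (2 * e + 2) (4 * e + 5)) (by simp; omega) (c := -γ)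
    (fun k hk => neg_ne_zero.mpr (hγ k (mem_Ico.mp hk).2))
  obtain ⟨hB, hBcard⟩ := nrComputes_configPoint hG (d := 4 * e + 3) (by omega)
    (I := range (2 * e + 2)) (by simp; omega) (c := γ)
    (fun k hk => hγ k (by simp at hk; omega))
  rw [← sum_configPoint_range_eq_sum_Ico (by omega) (by omega)] at hA
  have hGcard : #G + 1 = 2 * e * (e + 1) := by
    rw [card_erase_add_one (by simp; omega), card_product, card_range, card_range]
  have hchoose : Nat.choose (2 * e + 3) 2 = (e + 1) * (2 * e + 3) := by
    rw [Nat.choose_two_right, show 2 * e + 3 - 1 = 2 * (e + 1) by omega, mul_left_comm,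
      Nat.mul_div_cancel_left _ two_pos, mul_comm]
  rw [card_range] at hBcard
  rw [Nat.card_Ico, show 4 * e + 5 - (2 * e + 2) = 2 * e + 3 by omega] at hAcard
  exact ⟨_, _, _, hB.ne_zero (card_pos.mp (by omega)), isHomogeneous_sum_smul_linForm_pow _ _ _,
    by rw [hAcard, hchoose]; nlinarith, by rw [hBcard, hchoose]; nlinarith, hA, hB⟩
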